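/- The normalized log-volume of the thin spherical shell in ℂ^m satisfies: lim_{δ→0} lim_{m→∞} (1/m)·ln Vol{x ∈ ℂ^m : |‖x‖² − m·P_x| ≤ δ·m} = ln(π·e·P_x), for any P_x > 0. -/

import Mathlib

open MeasureTheory Real Filter

/-!
The set is the difference of two complex ℓ²-balls, of squared radii `m q` and `m c`, where
`q = P_x + δ` and `c = max (P_x - δ) 0` (the cut-off at `0` because `‖x‖² ≥ 0`); a ball of
squared radius `R` in `ℂ^m` has volume `(π R)^m / m!`. Hence
`(1/m) ln Vol = ln π + (ln m - (ln m!)/m) + (1/m) ln (q^m - c^m)`. Stirling gives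
`ln m - (ln m!)/m → 1` and the last term tends to `ln q` since `c < q`, so the inner limit is
`ln (π e (P_x + δ))`, which is continuous in `δ`.
-/

section BallVolume

variable {ι : Type*} [Fintype ι]

lemma sum_norm_rpow_two_rpow_half (x : ι → ℂ) :
    (∑ i, ‖x i‖ ^ (2 : ℝ)) ^ (1 / 2 : ℝ) = √(∑ i, ‖x i‖ ^ 2) := by
  simp only [Real.rpow_two, Real.sqrt_eq_rpow, one_div]

lemma ofReal_sqrt_pow_mul_ofReal_gamma {R : ℝ} (hR : 0 ≤ R) (n : ℕ) :
    ENNReal.ofReal √R ^ (2 * n) *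
        ENNReal.ofReal ((π * Real.Gamma (2 / 2 + 1)) ^ n / Real.Gamma (2 * n / 2 + 1)) =
      ENNReal.ofReal ((π * R) ^ n / n.factorial) := by
  have hΓ : Real.Gamma (2 * n / 2 + 1) = n.factorial := by
    rw [mul_div_cancel_left₀ _ two_ne_zero, Real.Gamma_nat_eq_factorial]
  rw [div_self two_ne_zero, one_add_one_eq_two, Real.Gamma_two, mul_one, hΓ,
    ← ENNReal.ofReal_pow (Real.sqrt_nonneg R), ← ENNReal.ofReal_mul (by positivity),
    pow_mul, Real.sq_sqrt hR, mul_pow, mul_div_assoc', mul_comm (R ^ n)]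

variable [Nonempty ι]

theorem volume_sum_norm_sq_le {R : ℝ} (hR : 0 ≤ R) :
    volume {x : ι → ℂ | ∑ i, ‖x i‖ ^ 2 ≤ R} =
      ENNReal.ofReal ((π * R) ^ Fintype.card ι / (Fintype.card ι).factorial) := by
  have h := Complex.volume_sum_rpow_le (ι := ι) one_le_two √R
  simp only [sum_norm_rpow_two_rpow_half, Real.sqrt_le_sqrt_iff hR] at h
  rw [h, ofReal_sqrt_pow_mul_ofReal_gamma hR]

theorem volume_sum_norm_sq_lt {R : ℝ} (hR : 0 ≤ R) :
    volume {x : ι → ℂ | ∑ i, ‖x i‖ ^ 2 < R} =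
      ENNReal.ofReal ((π * R) ^ Fintype.card ι / (Fintype.card ι).factorial) := by
  have h := Complex.volume_sum_rpow_lt (ι := ι) one_le_two √R
  simp only [sum_norm_rpow_two_rpow_half,
    Real.sqrt_lt_sqrt_iff (Finset.sum_nonneg fun i _ => sq_nonneg ‖_‖)] at h
  rw [h, ofReal_sqrt_pow_mul_ofReal_gamma hR]

theorem volume_shell {a b : ℝ} (ha : 0 ≤ a) (hab : a ≤ b) :
    volume {x : ι → ℂ | a ≤ ∑ i, ‖x i‖ ^ 2 ∧ ∑ i, ‖x i‖ ^ 2 ≤ b} =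
      ENNReal.ofReal (((π * b) ^ Fintype.card ι - (π * a) ^ Fintype.card ι) /
        (Fintype.card ι).factorial) := by
  have hset : {x : ι → ℂ | a ≤ ∑ i, ‖x i‖ ^ 2 ∧ ∑ i, ‖x i‖ ^ 2 ≤ b} =
      {x | ∑ i, ‖x i‖ ^ 2 ≤ b} \ {x | ∑ i, ‖x i‖ ^ 2 < a} := by
    ext x; simp [and_comm]
  have hsub : {x : ι → ℂ | ∑ i, ‖x i‖ ^ 2 < a} ⊆ {x | ∑ i, ‖x i‖ ^ 2 ≤ b} :=
    fun x hx => (le_of_lt hx).trans hab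
  have hmeas : MeasurableSet {x : ι → ℂ | ∑ i, ‖x i‖ ^ 2 < a} :=
    measurableSet_lt (by fun_prop) measurable_const
  rw [hset, measure_sdiff hsub hmeas.nullMeasurableSet (by simp [volume_sum_norm_sq_lt ha]),
    volume_sum_norm_sq_le (ha.trans hab), volume_sum_norm_sq_lt ha,
    ← ENNReal.ofReal_sub _ (by positivity), sub_div]

end BallVolume

theorem tendsto_log_sub_log_factorial_div :
    Tendsto (fun m : ℕ => log m - log m.factorial / m) atTop (nhds 1) := by
  have h_seq : Tendsto (fun m : ℕ => log (Stirling.stirlingSeq m) / m) atTop (nhds 0) :=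
    ((continuousAt_log (by positivity)).tendsto.comp
      Stirling.tendsto_stirlingSeq_sqrt_pi).div_atTop tendsto_natCast_atTop_atTop
  have h_log : Tendsto (fun m : ℕ => log (2 * m) / (2 * m)) atTop (nhds 0) :=
    isLittleO_log_id_atTop.tendsto_div_nhds_zero.comp
      (tendsto_natCast_atTop_atTop.const_mul_atTop two_pos)
  have h_lim := (tendsto_const_nhds (x := (1 : ℝ))).sub h_seq |>.sub h_log
  rw [sub_zero, sub_zero] at h_lim
  refine h_lim.congr' ?_
  filter_upwards [eventually_gt_atTop 0] with m hm
  have hm' : (0 : ℝ) < m := Nat.cast_pos.mpr hm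
  have h_fact := Stirling.log_stirlingSeq_formula m
  rw [log_div hm'.ne' (exp_ne_zero 1), log_exp] at h_fact
  rw [h_fact]
  field_simp
  ring

theorem tendsto_inv_mul_log_pow_sub_pow {c q : ℝ} (hc : 0 ≤ c) (hcq : c < q) :
    Tendsto (fun m : ℕ => (1 / (m : ℝ)) * log (q ^ m - c ^ m)) atTop (nhds (log q)) := by
  have hq : 0 < q := hc.trans_lt hcq
  set r := c / q
  have hr : r < 1 := (div_lt_one hq).mpr hcq
  have h_pow : Tendsto (fun m : ℕ => log (1 - r ^ m)) atTop (nhds 0) := by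
    have := ((tendsto_pow_atTop_nhds_zero_of_lt_one (by positivity) hr).const_sub 1).log
      (by norm_num)
    simpa using this
  have h_lim := (tendsto_one_div_atTop_nhds_zero_nat.mul h_pow).const_add (log q)
  rw [mul_zero, add_zero] at h_lim
  refine h_lim.congr' ?_
  filter_upwards [eventually_gt_atTop 0] with m hm
  have hrm : r ^ m < 1 := pow_lt_one₀ (by positivity) hr hm.ne'
  have h_factor : q ^ m - c ^ m = q ^ m * (1 - r ^ m) := by
    rw [div_pow, mul_sub, mul_div_cancel₀ _ (pow_pos hq m).ne', mul_one]
  rw [h_factor, log_mul (pow_pos hq m).ne' (sub_pos.mpr hrm).ne', log_pow]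
  field_simp

theorem tendsto_inv_mul_log_shell_volume {c q : ℝ} (hc : 0 ≤ c) (hcq : c < q) :
    Tendsto (fun m : ℕ => (1 / (m : ℝ)) *
        log (((π * (m * q)) ^ m - (π * (m * c)) ^ m) / m.factorial))
      atTop (nhds (log (π * exp 1 * q))) := by
  have hq : 0 < q := hc.trans_lt hcq
  have h_lim := ((tendsto_log_sub_log_factorial_div.const_add (log π)).add
    (tendsto_inv_mul_log_pow_sub_pow hc hcq))
  rw [log_mul (by positivity) hq.ne', log_mul pi_ne_zero (exp_ne_zero 1), log_exp]
  refine h_lim.congr' ?_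
  filter_upwards [eventually_gt_atTop 0] with m hm
  have hm' : (0 : ℝ) < m := Nat.cast_pos.mpr hm
  have h_diff : 0 < q ^ m - c ^ m := sub_pos.mpr (pow_lt_pow_left₀ hcq hc hm.ne')
  have h_factor : (π * (m * q)) ^ m - (π * (m * c)) ^ m = (π * m) ^ m * (q ^ m - c ^ m) := by
    ring
  rw [h_factor, log_div (by positivity) (by positivity), log_mul (by positivity) h_diff.ne',
    log_pow, log_mul pi_ne_zero hm'.ne']
  field_simp
  ring

/-- Normalized log-volume of the thin spherical shell in `ℂ^m`:
`lim_{δ→0⁺} lim_{m→∞} (1/m)·ln Vol{x : |‖x‖² − m P_x| ≤ δ m} = ln(π e P_x)`. -/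
theorem shell_log_volume_limit (Px : ℝ) (hPx : 0 < Px) :
    ∃ L : ℝ → ℝ,
      (∀ δ : ℝ, 0 < δ →
        Tendsto (fun m : ℕ =>
            (1 / (m : ℝ)) * Real.log
              ((volume {x : Fin m → ℂ | |(∑ i, ‖x i‖ ^ 2) - m * Px| ≤ δ * m}).toReal))
          atTop (nhds (L δ))) ∧
      Tendsto L (nhdsWithin 0 (Set.Ioi 0)) (nhds (Real.log (π * Real.exp 1 * Px))) := by
  refine ⟨fun δ => log (π * exp 1 * (Px + δ)), fun δ hδ => ?_, ?_⟩
  · have hc : 0 ≤ max (Px - δ) 0 := le_max_right _ _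
    have hcq : max (Px - δ) 0 < Px + δ := max_lt (by linarith) (by linarith)
    refine (tendsto_inv_mul_log_shell_volume hc hcq).congr' ?_
    filter_upwards [eventually_gt_atTop 0] with m hm
    have : Nonempty (Fin m) := ⟨⟨0, hm⟩⟩
    have hm₀ : (0 : ℝ) ≤ m := Nat.cast_nonneg m
    have hset : {x : Fin m → ℂ | |(∑ i, ‖x i‖ ^ 2) - m * Px| ≤ δ * m} =
        {x | m * max (Px - δ) 0 ≤ ∑ i, ‖x i‖ ^ 2 ∧ ∑ i, ‖x i‖ ^ 2 ≤ m * (Px + δ)} := by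
      ext x
      have : 0 ≤ ∑ i, ‖x i‖ ^ 2 := by positivity
      simp only [Set.mem_ofPred_eq, abs_le, mul_max_of_nonneg _ _ hm₀, max_le_iff, mul_zero]
      constructor
      · rintro ⟨h₁, h₂⟩; exact ⟨⟨by linarith, this⟩, by linarith⟩
      · rintro ⟨⟨h₁, -⟩, h₂⟩; exact ⟨by linarith, by linarith⟩
    have h_ab := mul_le_mul_of_nonneg_left hcq.le hm₀
    rw [hset, volume_shell (by positivity) h_ab, Fintype.card_fin, ENNReal.toReal_ofReal]
    exact div_nonneg (sub_nonneg.mpr (pow_le_pow_left₀ (by positivity) (by gcongr) m))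
      (by positivity)
  · have h_cont : ContinuousAt (fun δ => log (π * exp 1 * (Px + δ))) 0 :=
      (continuousAt_log (by positivity)).comp (by fun_prop)
    simpa using h_cont.tendsto.mono_left nhdsWithin_le_nhds
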